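/- arXiv:2508.05930 — 3 statements merged into one kernel-verified Lean document; each statement's English description precedes it below -/
import Mathlib

section
/- If λ > 0 and u is a positive solution of the radial problem (r^{N−1} φ(u′(r)))′ = −λ r^{N−1} f(u(r)) on (0,1), u′(0) = 0, u(1) = 0, then u(0) ≥ U₀. -/
/-
The energy `E(r) = λ F(u(r)) + Φ*(φ(u'(r)))`, where `Φ*` is the primitive of `φ⁻¹` vanishing at
`0`, is nonincreasing along a solution: the equation gives
`E'(r) = -(N-1) r⁻¹ u'(r) φ(u'(r)) ≤ 0`. Since `Φ* ≥ 0`, comparing `E(1) = Φ*(φ(u'(1)))` with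
`E(0) = λ F(u(0))` gives `F(u(0)) ≥ 0`. As `f` is nondecreasing, `F` is convex on `[0, ∞)`, so it
is `≤ 0` on `[0, U₀]`; since `U₀` is the only positive zero of `F`, this forces `u(0) ≥ U₀`.
-/

open Set Filter MeasureTheory

/-- `u` (with derivative `u'`) is a positive solution of the radial problem
`(r^(N-1) φ(u'(r)))' = -λ r^(N-1) f(u(r))` on `(0,1)`, with `u'(0) = 0`, `u(1) = 0`,
`u ∈ C¹([0,1])`, `φ ∘ u' ∈ C¹((0,1))`, and `u > 0` on `[0,1)`. -/
structure IsPosSol (N : ℕ) (φ f : ℝ → ℝ) (lam : ℝ) (u u' : ℝ → ℝ) : Prop where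
  hasDeriv : ∀ r ∈ Set.Icc (0:ℝ) 1, HasDerivAt u (u' r) r
  contDeriv : ContinuousOn u' (Set.Icc 0 1)
  pos : ∀ r ∈ Set.Ico (0:ℝ) 1, 0 < u r
  phiC1 : ∃ w : ℝ → ℝ, ContinuousOn w (Set.Ioo 0 1) ∧
    ∀ r ∈ Set.Ioo (0:ℝ) 1, HasDerivAt (fun s => φ (u' s)) (w r) r
  eqn : ∀ r ∈ Set.Ioo (0:ℝ) 1,
    HasDerivAt (fun s => s ^ (N - 1) * φ (u' s)) (-(lam * r ^ (N - 1) * f (u r))) r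
  deriv_zero : u' 0 = 0
  bd : u 1 = 0

section PrimitiveIci

variable {f : ℝ → ℝ} {a : ℝ}

lemma continuous_comp_max_of_continuousOn_Ici (hf : ContinuousOn f (Ici a)) :
    Continuous fun s => f (max s a) :=
  hf.comp_continuous (continuous_id.max continuous_const) fun s => le_max_right s a

lemma integral_comp_max_of_le {t : ℝ} (ht : a ≤ t) :
    ∫ s in a..t, f (max s a) = ∫ s in a..t, f s :=
  intervalIntegral.integral_congr fun s hs => by
    rw [uIcc_of_le ht] at hs
    rw [max_eq_left hs.1]

lemma convexOn_primitive_Ici (hf : ContinuousOn f (Ici a)) (hfm : MonotoneOn f (Ici a)) :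
    ConvexOn ℝ (Ici a) fun t => ∫ s in a..t, f s := by
  have hg := continuous_comp_max_of_continuousOn_Ici hf
  have hderiv (t : ℝ) := (hg.integral_hasStrictDerivAt a t).hasDerivAt
  refine (MonotoneOn.convexOn_of_deriv convex_univ ?_ ?_ ?_).subset (subset_univ _) (convex_Ici a)
    |>.congr fun t ht => integral_comp_max_of_le ht
  · exact (continuous_iff_continuousAt.2 fun t => (hderiv t).continuousAt).continuousOn
  · exact fun t _ => (hderiv t).differentiableAt.differentiableWithinAt
  · intro x _ y _ hxy
    rw [(hderiv x).deriv, (hderiv y).deriv]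
    exact hfm (le_max_right x a) (le_max_right y a) (max_le_max_right a hxy)

end PrimitiveIci

lemma integral_nonneg_of_monotone {ψ : ℝ → ℝ} (hψ : Monotone ψ) (hψ0 : ψ 0 = 0) (t : ℝ) :
    0 ≤ ∫ s in 0..t, ψ s := by
  rcases le_total 0 t with ht | ht
  · exact intervalIntegral.integral_nonneg ht fun s hs => hψ0 ▸ hψ hs.1
  · rw [intervalIntegral.integral_symm, ← intervalIntegral.integral_neg]
    exact intervalIntegral.integral_nonneg ht fun s hs => neg_nonneg.2 (hψ0 ▸ hψ hs.2)

lemma mul_apply_nonneg_of_monotone {φ : ℝ → ℝ} (hφ : Monotone φ) (hφ0 : φ 0 = 0) (s : ℝ) :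
    0 ≤ s * φ s := by
  rcases le_total 0 s with hs | hs
  · exact mul_nonneg hs (hφ0 ▸ hφ hs)
  · exact mul_nonneg_of_nonpos_of_nonpos hs (hφ0 ▸ hφ hs)

lemma strictMono_mul_self_of_even {ϕ : ℝ → ℝ} (hnn : ∀ s, 0 ≤ ϕ s) (heven : ∀ s, ϕ (-s) = ϕ s)
    (hmono : StrictMonoOn ϕ (Ioi 0)) : StrictMono fun s => ϕ s * s := by
  refine strictMono_of_odd_strictMonoOn_nonneg (fun s => by simp only [heven]; ring) ?_
  intro x hx y hy hxy
  have hy : 0 < y := lt_of_le_of_lt hx hxy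
  have hϕy : 0 < ϕ y := (hnn (y / 2)).trans_lt (hmono (half_pos hy) hy (half_lt_self hy))
  rcases (show (0 : ℝ) ≤ x from hx).eq_or_lt with rfl | hx
  · simpa using mul_pos hϕy hy
  · have := hmono hx hy hxy
    nlinarith [hnn x]

lemma surjective_of_odd_of_rpow_le {φ : ℝ → ℝ} (hc : Continuous φ) (hodd : ∀ s, φ (-s) = -φ s)
    {c q : ℝ} (hc0 : 0 < c) (hq : 0 < q) (hle : ∀ r, 0 ≤ r → c * r ^ q ≤ φ r) :
    Function.Surjective φ := by
  have htop : Tendsto φ atTop atTop :=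
    tendsto_atTop_mono' atTop ((eventually_ge_atTop 0).mono hle)
      ((tendsto_rpow_atTop hq).const_mul_atTop hc0)
  have hbot : Tendsto φ atBot atBot := by
    have := tendsto_neg_atTop_atBot.comp (htop.comp tendsto_neg_atBot_atTop)
    exact this.congr fun s => by simp [hodd]
  exact hc.surjective htop hbot

namespace IsPosSol

variable {N : ℕ} {φ f u u' : ℝ → ℝ} {lam : ℝ}

lemma nonneg (hu : IsPosSol N φ f lam u u') {r : ℝ} (hr : r ∈ Icc 0 1) : 0 ≤ u r := by
  rcases hr.2.eq_or_lt with rfl | h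
  · exact hu.bd.ge
  · exact (hu.pos r ⟨hr.1, h⟩).le

lemma continuousOn (hu : IsPosSol N φ f lam u u') : ContinuousOn u (Icc 0 1) :=
  fun r hr => (hu.hasDeriv r hr).continuousAt.continuousWithinAt

lemma pow_mul_eq (hu : IsPosSol N φ f lam u u') {r w : ℝ} (hr : r ∈ Ioo 0 1)
    (hw : HasDerivAt (fun s => φ (u' s)) w r) :
    r ^ (N - 1) * (lam * f (u r) + w) = -((N - 1 : ℕ) * r ^ (N - 1 - 1) * φ (u' r)) := by
  have := ((hasDerivAt_pow (N - 1) r).mul hw).unique (hu.eqn r hr)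
  linear_combination this

lemma antitoneOn_energy (e : ℝ ≃o ℝ) (he0 : e 0 = 0) (hu : IsPosSol N e f lam u u')
    {G : ℝ → ℝ} (hGc : Continuous G) (hG : ∀ t, 0 < t → HasDerivAt G (f t) t) :
    AntitoneOn (fun r => lam * G (u r) + ∫ s in 0..e (u' r), e.symm s) (Icc 0 1) := by
  obtain ⟨w, -, hw⟩ := hu.phiC1
  have hΨ (t : ℝ) := (e.symm.continuous.integral_hasStrictDerivAt 0 t).hasDerivAt
  have hE (r : ℝ) (hr : r ∈ Ioo 0 1) :
      HasDerivAt (fun r => lam * G (u r) + ∫ s in 0..e (u' r), e.symm s)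
        (u' r * (lam * f (u r) + w r)) r := by
    have hG' := ((hG _ (hu.pos r ⟨hr.1.le, hr.2⟩)).comp r (hu.hasDeriv r (Ioo_subset_Icc_self hr)))
    have hΨ' := (hΨ (e (u' r))).comp r (hw r hr)
    rw [e.symm_apply_apply] at hΨ'
    exact ((hG'.const_mul lam).add hΨ').congr_deriv (by ring)
  refine antitoneOn_of_deriv_nonpos (convex_Icc 0 1) ?_ ?_ ?_
  · refine (continuousOn_const.mul (hGc.comp_continuousOn hu.continuousOn)).add ?_
    exact (continuous_iff_continuousAt.2 fun t => (hΨ t).continuousAt).comp_continuousOn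
      (e.continuous.comp_continuousOn hu.contDeriv)
  · rw [interior_Icc]
    exact fun r hr => (hE r hr).differentiableAt.differentiableWithinAt
  · rw [interior_Icc]
    intro r hr
    rw [(hE r hr).deriv]
    have hrN : 0 < r ^ (N - 1) := pow_pos hr.1 _
    have hsign := mul_apply_nonneg_of_monotone e.monotone he0 (u' r)
    have hcoef : (0 : ℝ) ≤ (N - 1 : ℕ) * r ^ (N - 1 - 1) :=
      mul_nonneg (Nat.cast_nonneg _) (pow_nonneg hr.1.le _)
    refine nonpos_of_mul_nonpos_left ?_ hrN
    have hODE := hu.pow_mul_eq hr (hw r hr)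
    have : u' r * (lam * f (u r) + w r) * r ^ (N - 1)
        = -((N - 1 : ℕ) * r ^ (N - 1 - 1) * (u' r * e (u' r))) := by
      linear_combination u' r * hODE
    exact this ▸ neg_nonpos.2 (mul_nonneg hcoef hsign)

theorem integral_nonneg_at_zero (e : ℝ ≃o ℝ) (he0 : e 0 = 0) (hu : IsPosSol N e f lam u u')
    (hlam : 0 < lam) (hf : ContinuousOn f (Ici 0)) : 0 ≤ ∫ s in 0..u 0, f s := by
  have hg := continuous_comp_max_of_continuousOn_Ici hf
  set G : ℝ → ℝ := fun t => ∫ s in 0..t, f (max s 0)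
  have hGd (t : ℝ) : HasDerivAt G (f (max t 0)) t := (hg.integral_hasStrictDerivAt 0 t).hasDerivAt
  have hGc : Continuous G := continuous_iff_continuousAt.2 fun t => (hGd t).continuousAt
  have hE := hu.antitoneOn_energy e he0 hGc (fun t ht => by simpa [max_eq_left ht.le] using hGd t)
    (left_mem_Icc.2 zero_le_one) (right_mem_Icc.2 zero_le_one) zero_le_one
  simp only [hu.bd, hu.deriv_zero, he0, G, intervalIntegral.integral_same, mul_zero,
    zero_add, add_zero] at hE
  rw [← integral_comp_max_of_le (hu.nonneg (left_mem_Icc.2 zero_le_one))]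
  have hΨ := integral_nonneg_of_monotone e.symm.monotone (e.symm_apply_eq.2 he0.symm)
    (e (u' 1))
  exact nonneg_of_mul_nonneg_right (hΨ.trans hE) hlam

end IsPosSol

theorem value_at_zero_ge_U0_general    (N : ℕ)
    (ϕ φ : ℝ → ℝ)
    (hϕc : Continuous ϕ) (hϕnn : ∀ s, 0 ≤ ϕ s) (hϕeven : ∀ s, ϕ (-s) = ϕ s)
    (hϕmono : StrictMonoOn ϕ (Set.Ioi 0))
    (hφ : ∀ s, φ s = ϕ s * s)
    (p c1 c2 : ℝ) (hp : 1 < p) (hc2 : 0 < c2)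
    (hgrow : ∀ r : ℝ, 0 ≤ r → c2 * r ^ (p - 1) ≤ φ r ∧ φ r ≤ c1 * r ^ (p - 1))
    (f : ℝ → ℝ) (hfc : ContinuousOn f (Set.Ici 0)) (hfm : MonotoneOn f (Set.Ici 0))
    (F : ℝ → ℝ) (hF : ∀ t, F t = ∫ s in (0:ℝ)..t, f s)
    (U0 : ℝ) (hFU0 : F U0 = 0)
    (hU0uniq : ∀ s : ℝ, 0 < s → F s = 0 → s = U0)
    (lam : ℝ) (hlam : 0 < lam) (u u' : ℝ → ℝ) (hu : IsPosSol N φ f lam u u') :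
    U0 ≤ u 0 := by
  have hφ_eq : φ = fun s => ϕ s * s := funext hφ
  have hφ_mono : StrictMono φ := hφ_eq ▸ strictMono_mul_self_of_even hϕnn hϕeven hϕmono
  have hφ_surj : Function.Surjective φ :=
    surjective_of_odd_of_rpow_le (hφ_eq ▸ hϕc.mul continuous_id)
      (fun s => by simp only [hφ, hϕeven]; ring) hc2 (sub_pos.2 hp) fun r hr => (hgrow r hr).1
  have hF_nonneg : 0 ≤ F (u 0) := (hF _).symm ▸
    hu.integral_nonneg_at_zero (hφ_mono.orderIsoOfSurjective φ hφ_surj) (by simp [hφ]) hlam hfc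
  have hu0 : 0 < u 0 := hu.pos 0 ⟨le_rfl, one_pos⟩
  by_contra! hlt
  have hF_convex : ConvexOn ℝ (Ici 0) F :=
    (convexOn_primitive_Ici hfc hfm).congr fun t _ => (hF t).symm
  have hF_nonpos : F (u 0) ≤ max (F 0) (F U0) :=
    hF_convex.le_on_segment self_mem_Ici (hu0.trans hlt).le (Icc_subset_segment ⟨hu0.le, hlt.le⟩)
  rw [hF 0, intervalIntegral.integral_same, hFU0, max_self] at hF_nonpos
  exact hlt.ne (hU0uniq _ hu0 (le_antisymm hF_nonpos hF_nonneg))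

theorem value_at_zero_ge_U0    (N : ℕ) (hN : 1 < N)
    (ϕ φ : ℝ → ℝ)
    (hϕc : Continuous ϕ) (hϕnn : ∀ s, 0 ≤ ϕ s) (hϕeven : ∀ s, ϕ (-s) = ϕ s)
    (hϕdiff : ∀ s : ℝ, s ≠ 0 → DifferentiableAt ℝ ϕ s)
    (hϕmono : StrictMonoOn ϕ (Set.Ioi 0))
    (hφ : ∀ s, φ s = ϕ s * s)
    (p c1 c2 : ℝ) (hp : 1 < p) (hc1 : 0 < c1) (hc2 : 0 < c2)
    (hgrow : ∀ r : ℝ, 0 ≤ r → c2 * r ^ (p - 1) ≤ φ r ∧ φ r ≤ c1 * r ^ (p - 1))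
    (f : ℝ → ℝ) (hfc : ContinuousOn f (Set.Ici 0)) (hfm : MonotoneOn f (Set.Ici 0))
    (hf0 : f 0 < 0) (u0 : ℝ) (hu0 : 0 < u0) (hfu0 : f u0 = 0)
    (hzero : ∀ s : ℝ, 0 ≤ s → f s = 0 → s = u0)
    (F : ℝ → ℝ) (hF : ∀ t, F t = ∫ s in (0:ℝ)..t, f s)
    (U0 : ℝ) (hU0 : 0 < U0) (hFU0 : F U0 = 0)
    (hU0uniq : ∀ s : ℝ, 0 < s → F s = 0 → s = U0)
    (hu0U0 : u0 < U0)
    (lam : ℝ) (hlam : 0 < lam) (u u' : ℝ → ℝ) (hu : IsPosSol N φ f lam u u') :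
    U0 ≤ u 0 :=
  value_at_zero_ge_U0_general N ϕ φ hϕc hϕnn hϕeven hϕmono hφ p c1 c2 hp hc2 hgrow f hfc hfm F hF U0
    hFU0 hU0uniq lam hlam u u' hu
end

section
/- If λ > 0 and u is a positive solution of the radial problem, then the energy E(r) := λ F(u(r)) + φ(u′(r)) u′(r) − Φ(u′(r)) is differentiable at every r ∈ (0,1) with E′(r) = −((N−1)/r) φ(u′(r)) u′(r); in particular E′(r) ≤ 0 for all r ∈ (0,1). -/
/-!
The energy splits as `λ F(u) + g(u')` with `g p = φ(p) p - Φ(p)`. Formally `g'(p) = p φ'(p)`,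
and `(g ∘ u')' = u' (φ ∘ u')'` holds although neither `φ` nor `u'` need be differentiable:
for monotone `φ`,
`g b - g a - a (φ b - φ a) = (b - a) φ b - ∫_a^b φ` lies between `0` and `(b - a)(φ b - φ a)`,
which is `o(1) · O(r - r₀)` along `a = u'(r₀)`, `b = u'(r)` as `u'` is continuous and `φ ∘ u'`
differentiable. Solving the radial equation for `(φ ∘ u')'` then gives
`E' = λ f(u) u' + u' (-λ f(u) - (N-1)/r φ(u')) = -(N-1)/r φ(u') u'`.
-/

open Set Filter MeasureTheory

open Asymptotics intervalIntegral

lemma monotone_mul_self_of_even {ϕ : ℝ → ℝ} (hnn : ∀ s, 0 ≤ ϕ s) (heven : ∀ s, ϕ (-s) = ϕ s)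
    (hmono : MonotoneOn ϕ (Ioi 0)) : Monotone fun s => ϕ s * s := by
  have nonneg_le : ∀ a b : ℝ, 0 ≤ a → a ≤ b → ϕ a * a ≤ ϕ b * b := by
    intro a b ha hab
    rcases ha.eq_or_lt with rfl | ha
    · simpa using mul_nonneg (hnn b) hab
    · exact mul_le_mul (hmono ha (ha.trans_le hab) hab) hab ha.le (hnn b)
  intro a b hab
  rcases le_total 0 a with ha | ha
  · exact nonneg_le a b ha hab
  rcases le_total 0 b with hb | hb
  · nlinarith [hnn a, hnn b]
  · have := nonneg_le (-b) (-a) (neg_nonneg.2 hb) (neg_le_neg hab)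
    rw [heven, heven] at this
    linarith

lemma Monotone.mul_sub_le_intervalIntegral {φ : ℝ → ℝ} (hm : Monotone φ) {a b : ℝ} (hab : a ≤ b) :
    φ a * (b - a) ≤ ∫ s in a..b, φ s ∧ ∫ s in a..b, φ s ≤ φ b * (b - a) := by
  constructor
  · simpa [mul_comm] using integral_mono_on (μ := volume) hab intervalIntegrable_const
      hm.intervalIntegrable fun s hs => hm hs.1
  · simpa [mul_comm] using integral_mono_on (μ := volume) hab hm.intervalIntegrable
      intervalIntegrable_const fun s hs => hm hs.2

lemma Monotone.sub_mul_sub_intervalIntegral_mem_Icc {φ : ℝ → ℝ} (hm : Monotone φ) (a b : ℝ) :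
    (b - a) * φ b - ∫ s in a..b, φ s ∈ Icc 0 ((b - a) * (φ b - φ a)) := by
  rcases le_total a b with hab | hba
  · obtain ⟨hl, hu⟩ := hm.mul_sub_le_intervalIntegral hab
    constructor <;> nlinarith
  · obtain ⟨hl, hu⟩ := hm.mul_sub_le_intervalIntegral hba
    rw [integral_symm]
    constructor <;> nlinarith

lemma Monotone.abs_mul_self_sub_integral_sub_le {φ : ℝ → ℝ} (hm : Monotone φ) (a b : ℝ) :
    |(φ b * b - ∫ s in 0..b, φ s) - (φ a * a - ∫ s in 0..a, φ s) - a * (φ b - φ a)|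
      ≤ |b - a| * |φ b - φ a| := by
  have hsplit := integral_interval_sub_left (μ := volume) (a := 0) (b := b) (c := a)
    hm.intervalIntegrable hm.intervalIntegrable
  obtain ⟨h0, h1⟩ := hm.sub_mul_sub_intervalIntegral_mem_Icc a b
  rw [← abs_mul, abs_of_nonneg (by linarith)]
  linarith [le_abs_self ((b - a) * (φ b - φ a))]

lemma Monotone.hasDerivAt_mul_self_sub_integral_comp {φ : ℝ → ℝ} (hm : Monotone φ)
    {v : ℝ → ℝ} {W x : ℝ} (hφv : HasDerivAt (fun s => φ (v s)) W x) (hv : ContinuousAt v x) :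
    HasDerivAt (fun s => φ (v s) * v s - ∫ t in 0..v s, φ t) (v x * W) x := by
  rw [hasDerivAt_iff_isLittleO]
  have hlin : (fun y => v x * (φ (v y) - φ (v x) - (y - x) * W)) =o[nhds x] fun y => y - x := by
    simpa [mul_comm] using (hasDerivAt_iff_isLittleO.1 hφv).const_mul_left (v x)
  have hv_sub : (fun y => v y - v x) =o[nhds x] fun _ => (1 : ℝ) :=
    (isLittleO_one_iff ℝ).2 (by simpa using hv.tendsto.sub_const (v x))
  have hrem : (fun y => (φ (v y) * v y - ∫ t in 0..v y, φ t)
      - (φ (v x) * v x - ∫ t in 0..v x, φ t) - v x * (φ (v y) - φ (v x))) =o[nhds x]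
      fun y => y - x := by
    refine IsBigO.trans_isLittleO ?_ (by simpa using hv_sub.mul_isBigO hφv.isBigO_sub)
    refine isBigO_of_le _ fun y => ?_
    simpa [Real.norm_eq_abs, abs_mul] using hm.abs_mul_self_sub_integral_sub_le (v x) (v y)
  refine (hrem.add hlin).congr_left fun y => ?_
  simp only [smul_eq_mul]
  ring

lemma hasDerivAt_intervalIntegral_of_continuousOn_Ici {f : ℝ → ℝ} {a t : ℝ}
    (hf : ContinuousOn f (Ici a)) (ht : a < t) :
    HasDerivAt (fun t => ∫ s in a..t, f s) (f t) t := by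
  refine integral_hasDerivAt_right ?_ ?_ (hf.continuousAt (Ici_mem_nhds ht))
  · exact (hf.mono (by rw [uIcc_of_le ht.le]; exact Icc_subset_Ici_self)).intervalIntegrable
  · exact (hf.mono Ioi_subset_Ici_self).stronglyMeasurableAtFilter isOpen_Ioi t ht

lemma eq_sub_div_mul_of_hasDerivAt_pow_mul {k : ℕ} {v : ℝ → ℝ} {W c r : ℝ} (hr : r ≠ 0)
    (hv : HasDerivAt v W r) (h : HasDerivAt (fun s => s ^ k * v s) (r ^ k * c) r) :
    W = c - k / r * v r := by
  have hprod := ((hasDerivAt_pow k r).mul hv).unique h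
  have hpow : (k : ℝ) * r ^ (k - 1) = k / r * r ^ k := by
    rcases k with _ | k
    · simp
    · field_simp
      simp [pow_succ]
  rw [hpow] at hprod
  exact mul_left_cancel₀ (pow_ne_zero k hr) (by linear_combination hprod)

theorem energy_deriv_general    (N : ℕ) (hN : 1 < N)
    (ϕ φ : ℝ → ℝ)
    (hϕnn : ∀ s, 0 ≤ ϕ s) (hϕeven : ∀ s, ϕ (-s) = ϕ s)
    (hϕmono : StrictMonoOn ϕ (Set.Ioi 0))
    (hφ : ∀ s, φ s = ϕ s * s)
    (f : ℝ → ℝ) (hfc : ContinuousOn f (Set.Ici 0))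
    (F : ℝ → ℝ) (hF : ∀ t, F t = ∫ s in (0:ℝ)..t, f s)
    (Φ : ℝ → ℝ) (hΦ : ∀ t, Φ t = ∫ s in (0:ℝ)..t, φ s)
    (lam : ℝ) (u u' : ℝ → ℝ) (hu : IsPosSol N φ f lam u u')
    (E : ℝ → ℝ) (hE : ∀ r, E r = lam * F (u r) + φ (u' r) * u' r - Φ (u' r)) :
    ∀ r ∈ Set.Ioo (0:ℝ) 1,
      HasDerivAt E (-(((N:ℝ) - 1) / r) * (φ (u' r) * u' r)) r ∧
      -(((N:ℝ) - 1) / r) * (φ (u' r) * u' r) ≤ 0 := by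
  rintro r ⟨hr0, hr1⟩
  have hφm : Monotone φ := by
    simpa only [← funext hφ] using monotone_mul_self_of_even hϕnn hϕeven hϕmono.monotoneOn
  obtain ⟨w, -, hw⟩ := hu.phiC1
  have hur : 0 < u r := hu.pos r ⟨hr0.le, hr1⟩
  have hu'r : HasDerivAt u (u' r) r := hu.hasDeriv r ⟨hr0.le, hr1.le⟩
  have hFu : HasDerivAt (fun s => lam * F (u s)) (lam * (f (u r) * u' r)) r := by
    simp only [hF]
    exact ((hasDerivAt_intervalIntegral_of_continuousOn_Ici hfc hur).comp r hu'r).const_mul lam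
  have hΦu : HasDerivAt (fun s => φ (u' s) * u' s - Φ (u' s)) (u' r * w r) r := by
    simp only [hΦ]
    exact hφm.hasDerivAt_mul_self_sub_integral_comp (hw r ⟨hr0, hr1⟩)
      (hu.contDeriv.continuousAt (Icc_mem_nhds hr0 hr1))
  have hwr : w r = -(lam * f (u r)) - ((N - 1 : ℕ) : ℝ) / r * φ (u' r) :=
    eq_sub_div_mul_of_hasDerivAt_pow_mul hr0.ne' (hw r ⟨hr0, hr1⟩)
      ((hu.eqn r ⟨hr0, hr1⟩).congr_deriv (by ring))
  rw [Nat.cast_sub hN.le, Nat.cast_one] at hwr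
  have hE' : E = fun s => lam * F (u s) + (φ (u' s) * u' s - Φ (u' s)) :=
    funext fun s => by rw [hE]; ring
  refine ⟨hE' ▸ (hFu.add hΦu).congr_deriv ?_, ?_⟩
  · rw [hwr]; ring
  · have hN1 : (0 : ℝ) ≤ N - 1 := by
      rw [sub_nonneg]; exact_mod_cast hN.le
    have hφu' : 0 ≤ φ (u' r) * u' r := by
      rw [hφ, mul_assoc]; exact mul_nonneg (hϕnn _) (mul_self_nonneg _)
    rw [neg_mul, neg_nonpos]
    exact mul_nonneg (div_nonneg hN1 hr0.le) hφu'

theorem energy_deriv    (N : ℕ) (hN : 1 < N)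
    (ϕ φ : ℝ → ℝ)
    (hϕc : Continuous ϕ) (hϕnn : ∀ s, 0 ≤ ϕ s) (hϕeven : ∀ s, ϕ (-s) = ϕ s)
    (hϕdiff : ∀ s : ℝ, s ≠ 0 → DifferentiableAt ℝ ϕ s)
    (hϕmono : StrictMonoOn ϕ (Set.Ioi 0))
    (hφ : ∀ s, φ s = ϕ s * s)
    (f : ℝ → ℝ) (hfc : ContinuousOn f (Set.Ici 0)) (hfm : MonotoneOn f (Set.Ici 0))
    (hf0 : f 0 < 0) (u0 : ℝ) (hu0 : 0 < u0) (hfu0 : f u0 = 0)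
    (hzero : ∀ s : ℝ, 0 ≤ s → f s = 0 → s = u0)
    (F : ℝ → ℝ) (hF : ∀ t, F t = ∫ s in (0:ℝ)..t, f s)
    (Φ : ℝ → ℝ) (hΦ : ∀ t, Φ t = ∫ s in (0:ℝ)..t, φ s)
    (lam : ℝ) (hlam : 0 < lam) (u u' : ℝ → ℝ) (hu : IsPosSol N φ f lam u u')
    (E : ℝ → ℝ) (hE : ∀ r, E r = lam * F (u r) + φ (u' r) * u' r - Φ (u' r)) :
    ∀ r ∈ Set.Ioo (0:ℝ) 1,
      HasDerivAt E (-(((N:ℝ) - 1) / r) * (φ (u' r) * u' r)) r ∧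
      -(((N:ℝ) - 1) / r) * (φ (u' r) * u' r) ≤ 0 :=
  energy_deriv_general N hN ϕ φ hϕnn hϕeven hϕmono hφ f hfc F hF Φ hΦ lam u u' hu E hE
end

section
/- Let λ > 0 and let u be a positive solution of the radial problem such that u(r) > (u₀ + U₀)/2 for all r ∈ [0, 1/2], and let k > 0 satisfy f(t) ≥ k t^α for all t ≥ (u₀ + U₀)/2. Then u′(r) < 0 on (0,1/2] and r^{N−1} φ(u′(r)) ≤ −(λ k / N) r^{N} u(r)^{α} for all r ∈ (0, 1/2]. -/
/-!
The flux `G(r) = r^(N-1) φ(u'(r))` vanishes at `0` and `G' = -λ r^(N-1) f(u)`. Wherever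
`f(u) ≥ m` this gives `G(r) ≤ -(λ m / N) r^N` by comparing derivatives. On `[0, 1/2]` we have
`u > (u₀ + U₀)/2`, so monotonicity of `f` gives a positive `m`; hence `G < 0` there, which forces
`u' < 0`. Then `u` decreases on `[0, r]`, so `m = f(u(r)) ≥ k u(r)^α` is admissible on `(0, r)`.
-/

open Set Filter MeasureTheory

theorem sub_le_sub_of_hasDerivAt_le {G H g h : ℝ → ℝ} {a b : ℝ} (hab : a ≤ b)
    (hGc : ContinuousOn G (Icc a b)) (hHc : ContinuousOn H (Icc a b))
    (hG : ∀ x ∈ Ioo a b, HasDerivAt G (g x) x) (hH : ∀ x ∈ Ioo a b, HasDerivAt H (h x) x)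
    (hgh : ∀ x ∈ Ioo a b, g x ≤ h x) :
    G b - G a ≤ H b - H a := by
  have hmono : MonotoneOn (fun x => H x - G x) (Icc a b) := by
    refine monotoneOn_of_hasDerivWithinAt_nonneg (f' := fun x => h x - g x) (convex_Icc a b)
      (hHc.sub hGc) (fun x hx => ?_) (fun x hx => ?_)
    all_goals rw [interior_Icc] at hx
    · exact ((hH x hx).sub (hG x hx)).hasDerivWithinAt
    · exact sub_nonneg.2 (hgh x hx)
  linarith [hmono (left_mem_Icc.2 hab) (right_mem_Icc.2 hab) hab]

def flux (N : ℕ) (φ u' : ℝ → ℝ) (r : ℝ) : ℝ := r ^ (N - 1) * φ (u' r)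

theorem flux_zero {N : ℕ} (hN : 1 < N) (φ u' : ℝ → ℝ) : flux N φ u' 0 = 0 := by
  simp [flux, zero_pow (Nat.sub_ne_zero_of_lt hN)]

theorem neg_of_flux_neg {N : ℕ} {ϕ φ u' : ℝ → ℝ} (hϕnn : ∀ s, 0 ≤ ϕ s) (hφ : ∀ s, φ s = ϕ s * s)
    {r : ℝ} (hr : 0 < r) (h : flux N φ u' r < 0) : u' r < 0 := by
  rw [flux, hφ] at h
  exact neg_of_mul_neg_right (neg_of_mul_neg_right h (pow_nonneg hr.le _)) (hϕnn _)

namespace IsPosSol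

variable {N : ℕ} {φ f : ℝ → ℝ} {lam : ℝ} {u u' : ℝ → ℝ}

theorem continuousOn_flux (hu : IsPosSol N φ f lam u u') (hφ : Continuous φ) :
    ContinuousOn (flux N φ u') (Icc 0 1) :=
  (continuous_pow _).continuousOn.mul (hφ.comp_continuousOn hu.contDeriv)

theorem flux_le (hu : IsPosSol N φ f lam u u') (hN : 1 < N) (hφ : Continuous φ) (hlam : 0 ≤ lam)
    {r m : ℝ} (hr : r ∈ Icc (0 : ℝ) 1) (hm : ∀ x ∈ Ioo 0 r, m ≤ f (u x)) :
    flux N φ u' r ≤ -(lam * m / N) * r ^ N := by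
  have hN0 : (N : ℝ) ≠ 0 := by positivity
  have hcomp := sub_le_sub_of_hasDerivAt_le (G := flux N φ u')
    (H := fun s => -(lam * m / N) * s ^ N) (h := fun x => -(lam * m / N) * (N * x ^ (N - 1))) hr.1
    ((hu.continuousOn_flux hφ).mono (Icc_subset_Icc le_rfl hr.2)) (by fun_prop)
    (fun x hx => hu.eqn x ⟨hx.1, hx.2.trans_le hr.2⟩)
    (fun x _ => by simpa using (hasDerivAt_pow N x).const_mul (-(lam * m / N)))
    (fun x hx => by
      rw [show -(lam * m / N) * (N * x ^ (N - 1)) = -(lam * x ^ (N - 1) * m) by field_simp]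
      have := mul_le_mul_of_nonneg_left (hm x hx) (mul_nonneg hlam (pow_pos hx.1 (N - 1)).le)
      linarith)
  simpa [flux_zero hN, zero_pow (by omega : N ≠ 0)] using hcomp

theorem antitoneOn (hu : IsPosSol N φ f lam u u') {a : ℝ} (ha : a ≤ 1)
    (h : ∀ r ∈ Ioo 0 a, u' r ≤ 0) : AntitoneOn u (Icc 0 a) := by
  have hd : ∀ x ∈ Icc 0 a, HasDerivAt u (u' x) x := fun x hx => hu.hasDeriv x ⟨hx.1, hx.2.trans ha⟩
  refine antitoneOn_of_hasDerivWithinAt_nonpos (f' := u') (convex_Icc 0 a)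
    (HasDerivAt.continuousOn hd) (fun x hx => ?_) (fun x hx => ?_)
  all_goals rw [interior_Icc] at hx
  · exact (hd x (Ioo_subset_Icc_self hx)).hasDerivWithinAt.mono interior_subset
  · exact h x hx

end IsPosSol

theorem flux_estimate_general    (N : ℕ) (hN : 1 < N)
    (ϕ φ : ℝ → ℝ)
    (hϕc : Continuous ϕ) (hϕnn : ∀ s, 0 ≤ ϕ s)
    (hφ : ∀ s, φ s = ϕ s * s)
    (f : ℝ → ℝ) (hfm : MonotoneOn f (Set.Ici 0))
    (u0 : ℝ) (hu0 : 0 < u0)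
    (U0 : ℝ) (hU0 : 0 < U0)
    (α : ℝ)
    (lam : ℝ) (hlam : 0 < lam) (u u' : ℝ → ℝ) (hu : IsPosSol N φ f lam u u')
    (hbig : ∀ r ∈ Set.Icc (0:ℝ) (1/2), (u0 + U0) / 2 < u r)
    (k : ℝ) (hk : 0 < k) (hkf : ∀ t : ℝ, (u0 + U0) / 2 ≤ t → k * t ^ α ≤ f t) :
    (∀ r ∈ Set.Ioc (0:ℝ) (1/2), u' r < 0) ∧
    (∀ r ∈ Set.Ioc (0:ℝ) (1/2),
      r ^ (N - 1) * φ (u' r) ≤ -(lam * k / N) * r ^ N * u r ^ α) := by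
  have hφc : Continuous φ := (funext hφ : φ = fun s => ϕ s * s) ▸ hϕc.mul continuous_id
  set t₀ := (u0 + U0) / 2
  have ht₀ : 0 < t₀ := by positivity
  have hf_mono : ∀ {s t}, t₀ ≤ s → s ≤ t → f s ≤ f t :=
    fun hs hst => hfm (ht₀.le.trans hs) (ht₀.le.trans (hs.trans hst)) hst
  have hr1 : ∀ {r}, r ∈ Ioc (0 : ℝ) (1 / 2) → r ∈ Icc (0 : ℝ) 1 :=
    fun hr => ⟨hr.1.le, hr.2.trans (by norm_num)⟩
  have hneg : ∀ r ∈ Ioc (0 : ℝ) (1 / 2), u' r < 0 := by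
    intro r hr
    have hflux := hu.flux_le hN hφc hlam.le (hr1 hr) (m := k * t₀ ^ α)
      fun x hx => (hkf t₀ le_rfl).trans (hf_mono le_rfl (hbig x ⟨hx.1.le, hx.2.le.trans hr.2⟩).le)
    refine neg_of_flux_neg hϕnn hφ hr.1 (hflux.trans_lt ?_)
    have : 0 < lam * (k * t₀ ^ α) / N * r ^ N := by have := hr.1; positivity
    linarith
  refine ⟨hneg, fun r hr => ?_⟩
  have hanti := hu.antitoneOn (hr1 hr).2 fun x hx => (hneg x ⟨hx.1, hx.2.le.trans hr.2⟩).le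
  have hbigr := (hbig r (Ioc_subset_Icc_self hr)).le
  calc r ^ (N - 1) * φ (u' r) = flux N φ u' r := rfl
    _ ≤ -(lam * (k * u r ^ α) / N) * r ^ N :=
      hu.flux_le hN hφc hlam.le (hr1 hr) fun x hx => (hkf (u r) hbigr).trans
        (hf_mono hbigr (hanti ⟨hx.1.le, hx.2.le⟩ (right_mem_Icc.2 hr.1.le) hx.2.le))
    _ = -(lam * k / N) * r ^ N * u r ^ α := by ring

theorem flux_estimate    (N : ℕ) (hN : 1 < N)
    (ϕ φ : ℝ → ℝ)
    (hϕc : Continuous ϕ) (hϕnn : ∀ s, 0 ≤ ϕ s) (hϕeven : ∀ s, ϕ (-s) = ϕ s)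
    (hϕdiff : ∀ s : ℝ, s ≠ 0 → DifferentiableAt ℝ ϕ s)
    (hϕmono : StrictMonoOn ϕ (Set.Ioi 0))
    (hφ : ∀ s, φ s = ϕ s * s)
    (p c1 c2 : ℝ) (hp : 1 < p) (hc1 : 0 < c1) (hc2 : 0 < c2)
    (hgrow : ∀ r : ℝ, 0 ≤ r → c2 * r ^ (p - 1) ≤ φ r ∧ φ r ≤ c1 * r ^ (p - 1))
    (f : ℝ → ℝ) (hfc : ContinuousOn f (Set.Ici 0)) (hfm : MonotoneOn f (Set.Ici 0))
    (hf0 : f 0 < 0) (u0 : ℝ) (hu0 : 0 < u0) (hfu0 : f u0 = 0)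
    (hzero : ∀ s : ℝ, 0 ≤ s → f s = 0 → s = u0)
    (F : ℝ → ℝ) (hF : ∀ t, F t = ∫ s in (0:ℝ)..t, f s)
    (U0 : ℝ) (hU0 : 0 < U0) (hFU0 : F U0 = 0)
    (hU0uniq : ∀ s : ℝ, 0 < s → F s = 0 → s = U0)
    (hu0U0 : u0 < U0)
    (α : ℝ) (hα : p - 1 < α)
    (lam : ℝ) (hlam : 0 < lam) (u u' : ℝ → ℝ) (hu : IsPosSol N φ f lam u u')
    (hbig : ∀ r ∈ Set.Icc (0:ℝ) (1/2), (u0 + U0) / 2 < u r)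
    (k : ℝ) (hk : 0 < k) (hkf : ∀ t : ℝ, (u0 + U0) / 2 ≤ t → k * t ^ α ≤ f t) :
    (∀ r ∈ Set.Ioc (0:ℝ) (1/2), u' r < 0) ∧
    (∀ r ∈ Set.Ioc (0:ℝ) (1/2),
      r ^ (N - 1) * φ (u' r) ≤ -(lam * k / N) * r ^ N * u r ^ α) :=
  flux_estimate_general N hN ϕ φ hϕc hϕnn hφ f hfm u0 hu0 U0 hU0 α lam hlam u u' hu hbig k hk hkf
end
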